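/- arXiv:2504.06745 — 5 statements merged into one kernel-verified Lean document; each statement's English description precedes it below -/
import Mathlib

section
/- Let K ⊆ ℂⁿ be compact, w a continuous weight, and (v,μ) a vector measure pair on K with ‖v(x)‖ ≤ 1 for every x ∈ K (and ‖v(x)‖ = 1 μ-a.e.). Then for every r ∈ ℕ: Z_r^{v,μ,w} ≤ μ(K)^N · (δ^{w,r}(K,U))^{2sℓ_r}, where N = s·m_r. -/
/-!
The integrand of `Z_r` is `|det V(x)|²` with `V(x) = [⟨v(x_j), (q_k ⊙ w^r)(x_j)⟩]_{j,k}`.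
For `x ∈ Kᴺ` the functionals `g ↦ ⟨v(x_j), g(x_j)⟩` on `C(K, ℂˢ)` have norm at most
`‖v(x_j)‖ ≤ 1`, so `|det V(x)|` is one of the numbers whose supremum is `δ^{sℓ_r}`; integrating
this bound over `Kᴺ` produces the factor `μ(K)ᴺ`. When `sℓ_r = 0` the power of `δ` is `1`, and
`|det V(x)| ≤ 1` holds directly: for `s = 0` the determinant is empty, and for `r = 0` the rows
of `V(x)` are the vectors `conj v(x_j)` of norm at most one, so Hadamard's inequality applies.
-/

open MeasureTheory Filter Topology
open scoped BigOperators ComplexConjugate ENNReal NNReal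

noncomputable section

/-- Points of ℂⁿ. -/
abbrev Pt (n : ℕ) := Fin n → ℂ

/-- The Hermitian space U ≅ ℂˢ with its standard Hermitian inner product. -/
abbrev Vec (s : ℕ) := EuclideanSpace ℂ (Fin s)

/-- The monomial x^β. -/
def mono {n : ℕ} (β : Fin n → ℕ) (x : Pt n) : ℂ := ∏ i, x i ^ β i

/-- m_r := C(n+r, n), the dimension of the space of polynomials of degree ≤ r in n variables. -/
def mr (n r : ℕ) : ℕ := (n + r).choose n

/-- ℓ_r := Σ_{k=1}^{r} k (m_k − m_{k−1}). -/
def lr (n r : ℕ) : ℕ := ∑ k ∈ Finset.Icc 1 r, k * (mr n k - mr n (k - 1))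

/-- `B` enumerates the multi-indices β ∈ ℕⁿ with |β| ≤ r. -/
def IsEnum {n : ℕ} (r m : ℕ) (B : Fin m → Fin n → ℕ) : Prop :=
  Function.Injective B ∧ (∀ l, ∑ j, B l j ≤ r) ∧
    ∀ γ : Fin n → ℕ, (∑ j, γ j) ≤ r → ∃ l, B l = γ

/-- The basis polynomial q_{(l,i)}(x) := x^{β(l)} e_i of 𝒫_r(U). -/
def qb {n s m : ℕ} (B : Fin m → Fin n → ℕ) (j : Fin m × Fin s) (x : Pt n) : Vec s :=
  EuclideanSpace.single j.2 (mono (B j.1) x)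

/-- f ⊙ w^r : componentwise multiplication by the r-th power of the weight w. -/
def wodot {n s : ℕ} (w : Pt n → Fin s → ℝ) (r : ℕ) (f : Pt n → Vec s) : Pt n → Vec s :=
  fun x => WithLp.toLp 2 (fun i => ((w x i : ℂ) ^ r) * f x i)

/-- f ⊙ ω : componentwise multiplication by a real vector function ω. -/
def modot {n s : ℕ} (ω : Pt n → Fin s → ℝ) (f : Pt n → Vec s) : Pt n → Vec s :=
  fun x => WithLp.toLp 2 (fun i => ((ω x i : ℂ)) * f x i)

/-- The ℂˢ-valued polynomial of degree ≤ r with coefficients c (in the basis qb). -/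
def poly {n s m : ℕ} (B : Fin m → Fin n → ℕ) (c : Fin m × Fin s → ℂ) (x : Pt n) : Vec s :=
  WithLp.toLp 2 (fun i => ∑ l, c (l, i) * mono (B l) x)

/-- A scalar polynomial of degree ≤ r with coefficients c. -/
def spoly {n m : ℕ} (B : Fin m → Fin n → ℕ) (c : Fin m → ℂ) (x : Pt n) : ℂ :=
  ∑ l, c l * mono (B l) x

/-- The rank-one semimetric g_x(a,b) := conj(⟨v(x),a⟩)·⟨v(x),b⟩. -/
def gval {n s : ℕ} (v : Pt n → Vec s) (x : Pt n) (a b : Vec s) : ℂ :=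
  conj (inner ℂ (v x) a : ℂ) * (inner ℂ (v x) b : ℂ)

lemma mono_continuous {n : ℕ} (β : Fin n → ℕ) : Continuous (mono β) := by
  unfold mono
  exact continuous_finset_prod _ (fun i _ => (continuous_apply i).pow _)

/-- q_j ⊙ w^r as a continuous map on K, an element of the Banach space C(K, ℂˢ). -/
def qwCont {n s m : ℕ} (K : Set (Pt n)) (w : Pt n → Fin s → ℝ)
    (hw : ContinuousOn (fun x => w x) K) (B : Fin m → Fin n → ℕ) (r : ℕ)
    (j : Fin m × Fin s) : C(↥K, Vec s) :=
  ⟨fun x => wodot w r (qb B j) x.1, by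
    unfold wodot
    refine (PiLp.continuous_toLp 2 _).comp ?_
    apply continuous_pi
    intro i
    unfold qb
    have hwc : Continuous fun x : ↥K => w x.1 i := by
      have := hw.comp_continuous continuous_subtype_val (fun x : ↥K => x.2)
      exact (continuous_apply i).comp this
    have h1 : Continuous fun x : ↥K => ((w x.1 i : ℂ)) :=
      Complex.continuous_ofReal.comp hwc
    have h2 : Continuous fun x : ↥K =>
        (EuclideanSpace.single j.2 (mono (B j.1) x.1) : Vec s) i := by
      simp only [EuclideanSpace.single_apply]
      by_cases h : i = j.2
      · simp only [h, if_true]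
        exact (mono_continuous (B j.1)).comp continuous_subtype_val
      · simp only [h, if_false]
        exact continuous_const
    exact (h1.pow r).mul h2⟩

/-- The quantity maximized in the definition of δ^{w,r}(K,U) : the supremum of
|det[T_i (q_j ⊙ w^r)]| over N-tuples of continuous linear functionals on C(K,ℂˢ)
of operator norm at most 1. -/
def deltaVBase {n : ℕ} (s : ℕ) (K : Set (Pt n)) [CompactSpace ↥K]
    (w : Pt n → Fin s → ℝ) (hw : ContinuousOn (fun x => w x) K)
    (r : ℕ) (B : Fin (mr n r) → Fin n → ℕ) : ℝ :=
  sSup {t : ℝ | ∃ T : (Fin (mr n r) × Fin s) → (C(↥K, Vec s) →L[ℂ] ℂ),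
    (∀ i, ‖T i‖ ≤ 1) ∧
    t = ‖(Matrix.det (Matrix.of fun i j => T i (qwCont K w hw B r j)))‖}

/-- The r-th weighted transfinite diameter δ^{w,r}(K,U). -/
def deltaV {n : ℕ} (s : ℕ) (K : Set (Pt n)) [CompactSpace ↥K]
    (w : Pt n → Fin s → ℝ) (hw : ContinuousOn (fun x => w x) K)
    (r : ℕ) (B : Fin (mr n r) → Fin n → ℕ) : ℝ :=
  (deltaVBase s K w hw r B) ^ (((s * lr n r : ℕ) : ℝ)⁻¹)

/-- The free energy Z_r^{v,μ,w}. -/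
def Zfun {n : ℕ} (s : ℕ) (K : Set (Pt n)) (μ : Measure (Pt n)) [IsFiniteMeasure μ]
    (v : Pt n → Vec s)
    (w : Pt n → Fin s → ℝ) (r m : ℕ) (B : Fin m → Fin n → ℕ) : ℂ :=
  ∫ x : (Fin m × Fin s) → Pt n,
    (∑ σ : Equiv.Perm (Fin m × Fin s), ∑ τ : Equiv.Perm (Fin m × Fin s),
      ((Equiv.Perm.sign σ : ℤ) : ℂ) * ((Equiv.Perm.sign τ : ℤ) : ℂ) *
      ∏ j, gval v (x j) (wodot w r (qb B (σ j)) (x j)) (wodot w r (qb B (τ j)) (x j)))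
    ∂(Measure.pi fun _ => μ.restrict K)

open scoped Matrix ComplexOrder

lemma Real.prod_le_one_of_sum_le_card {ι : Type*} (t : Finset ι) {f : ι → ℝ}
    (hf : ∀ i ∈ t, 0 ≤ f i) (hsum : ∑ i ∈ t, f i ≤ (t.card : ℝ)) : ∏ i ∈ t, f i ≤ 1 :=
  calc ∏ i ∈ t, f i ≤ ∏ i ∈ t, Real.exp (f i - 1) :=
        Finset.prod_le_prod hf fun i _ => by linarith [Real.add_one_le_exp (f i - 1)]
    _ = Real.exp (∑ i ∈ t, f i - t.card) := by
        rw [← Real.exp_sum, Finset.sum_sub_distrib, Finset.sum_const, nsmul_one]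
    _ ≤ 1 := Real.exp_le_one_iff.mpr (by linarith)

lemma Matrix.PosSemidef.norm_det_le_one {ι : Type*} [Fintype ι] [DecidableEq ι]
    {P : Matrix ι ι ℂ} (hP : P.PosSemidef) (hdiag : ∀ i, (P i i).re ≤ 1) : ‖P.det‖ ≤ 1 := by
  have heig := hP.eigenvalues_nonneg
  have htrace : ∑ i, hP.1.eigenvalues i ≤ ((Finset.univ : Finset ι).card : ℝ) := by
    have h := congrArg RCLike.re hP.1.trace_eq_sum_eigenvalues
    simp only [Matrix.trace, Matrix.diag, map_sum, RCLike.ofReal_re] at h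
    rw [← h]
    simpa using Finset.sum_le_sum fun i (_ : i ∈ Finset.univ) => hdiag i
  rw [hP.1.det_eq_prod_eigenvalues, ← RCLike.ofReal_prod, RCLike.norm_ofReal,
    abs_of_nonneg (Finset.prod_nonneg fun i _ => heig i)]
  exact Real.prod_le_one_of_sum_le_card _ (fun i _ => heig i) htrace

lemma Matrix.norm_det_le_one_of_rows {ι : Type*} [Fintype ι] [DecidableEq ι]
    (A : Matrix ι ι ℂ) (hrow : ∀ i, ∑ k, ‖A i k‖ ^ 2 ≤ 1) : ‖A.det‖ ≤ 1 := by
  have hgram : ‖(A * Aᴴ).det‖ ≤ 1 := by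
    refine (Matrix.posSemidef_self_mul_conjTranspose A).norm_det_le_one fun i => ?_
    simpa [Matrix.mul_apply, Complex.re_sum, Complex.mul_conj', ← Complex.ofReal_pow] using hrow i
  rw [Matrix.det_mul, Matrix.det_conjTranspose, norm_mul, RCLike.star_def,
    Complex.norm_conj] at hgram
  nlinarith [norm_nonneg A.det]

lemma Matrix.conj_det_mul_det_eq_sum_sum {ι : Type*} [Fintype ι] [DecidableEq ι]
    (A : Matrix ι ι ℂ) :
    conj A.det * A.det = ∑ σ : Equiv.Perm ι, ∑ τ : Equiv.Perm ι,
      ((Equiv.Perm.sign σ : ℤ) : ℂ) * ((Equiv.Perm.sign τ : ℤ) : ℂ) *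
        ∏ j, conj (A j (σ j)) * A j (τ j) := by
  have hdet : A.det = ∑ τ : Equiv.Perm ι, ((Equiv.Perm.sign τ : ℤ) : ℂ) * ∏ j, A j (τ j) := by
    rw [← Matrix.det_transpose, Matrix.det_apply]
    simp only [Units.smul_def, zsmul_eq_mul, Matrix.transpose_apply]
  rw [hdet, map_sum, Finset.sum_mul_sum]
  refine Finset.sum_congr rfl fun σ _ => Finset.sum_congr rfl fun τ _ => ?_
  rw [map_mul, map_prod, map_intCast, Finset.prod_mul_distrib]
  ring

lemma norm_integral_pi_restrict_le {α ι E : Type*} [MeasurableSpace α] [Fintype ι]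
    [NormedAddCommGroup E] [NormedSpace ℝ E] (μ : Measure α) [IsFiniteMeasure μ] {K : Set α}
    (hK : MeasurableSet K) {F : (ι → α) → E} {C : ℝ}
    (hF : ∀ x, (∀ j, x j ∈ K) → ‖F x‖ ≤ C) :
    ‖∫ x, F x ∂Measure.pi fun _ => μ.restrict K‖ ≤ C * μ.real K ^ Fintype.card ι := by
  have hmem : ∀ᵐ x ∂Measure.pi (fun _ => μ.restrict K), ∀ j, x j ∈ K :=
    Measure.ae_pi_le_pi <|
      Filter.eventually_pi (ι := ι) (p := fun _ y => y ∈ K) fun _ => ae_restrict_mem hK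
  refine (norm_integral_le_of_norm_le_const (hmem.mono hF)).trans_eq ?_
  simp [Measure.real, Measure.pi_univ, Finset.prod_const, ENNReal.toReal_pow]

lemma norm_innerSL_comp_evalCLM_le {𝕜 X E : Type*} [RCLike 𝕜] [TopologicalSpace X]
    [CompactSpace X] [NormedAddCommGroup E] [InnerProductSpace 𝕜 E] (u : E) (x : X) :
    ‖(innerSL 𝕜 u).comp (ContinuousMap.evalCLM 𝕜 x : C(X, E) →L[𝕜] E)‖ ≤ ‖u‖ := by
  refine (ContinuousLinearMap.opNorm_comp_le _ _).trans ?_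
  rw [innerSL_apply_norm]
  refine mul_le_of_le_one_right (norm_nonneg u) ?_
  exact ContinuousLinearMap.opNorm_le_bound _ zero_le_one fun g => by
    simpa using g.norm_coe_le_norm x

lemma bddAbove_norm_det_apply {ι F : Type*} [Fintype ι] [DecidableEq ι]
    [NormedAddCommGroup F] [NormedSpace ℂ F] (f : ι → F) :
    BddAbove {t : ℝ | ∃ T : ι → F →L[ℂ] ℂ, (∀ i, ‖T i‖ ≤ 1) ∧
      t = ‖(Matrix.det (Matrix.of fun i j => T i (f j)))‖} := by
  refine ⟨(Fintype.card ι).factorial • (∑ j, ‖f j‖) ^ Fintype.card ι, ?_⟩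
  rintro t ⟨T, hT, rfl⟩
  refine Matrix.det_le (abv := NormedField.toAbsoluteValue ℂ) fun i j => ?_
  calc ‖T i (f j)‖ ≤ ‖T i‖ * ‖f j‖ := (T i).le_opNorm (f j)
    _ ≤ 1 * ‖f j‖ := by gcongr; exact hT i
    _ ≤ ∑ j, ‖f j‖ := by
        rw [one_mul]
        exact Finset.single_le_sum (fun j _ => norm_nonneg (f j)) (Finset.mem_univ j)

def vandermondePairing {n s m : ℕ} (v : Pt n → Vec s) (w : Pt n → Fin s → ℝ) (r : ℕ)
    (B : Fin m → Fin n → ℕ) (x : Fin m × Fin s → Pt n) : Matrix (Fin m × Fin s) (Fin m × Fin s) ℂ :=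
  Matrix.of fun j k => inner ℂ (v (x j)) (wodot w r (qb B k) (x j))

lemma Zfun_eq_integral_norm_det_sq {n s : ℕ} (K : Set (Pt n)) (μ : Measure (Pt n))
    [IsFiniteMeasure μ] (v : Pt n → Vec s) (w : Pt n → Fin s → ℝ) (r m : ℕ)
    (B : Fin m → Fin n → ℕ) :
    Zfun s K μ v w r m B = ∫ x, ((‖(vandermondePairing v w r B x).det‖ ^ 2 : ℝ) : ℂ)
      ∂Measure.pi fun _ => μ.restrict K := by
  refine integral_congr_ae (Filter.Eventually.of_forall fun x => ?_)
  simp only [Complex.ofReal_pow, ← Complex.conj_mul', Matrix.conj_det_mul_det_eq_sum_sum]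
  rfl

section TransfiniteDiameter

variable {n s : ℕ} {K : Set (Pt n)} [CompactSpace ↥K] {w : Pt n → Fin s → ℝ}
  {hw : ContinuousOn (fun y => w y) K} {r : ℕ} {B : Fin (mr n r) → Fin n → ℕ}

lemma norm_det_le_deltaVBase (T : Fin (mr n r) × Fin s → C(↥K, Vec s) →L[ℂ] ℂ)
    (hT : ∀ i, ‖T i‖ ≤ 1) :
    ‖(Matrix.of fun i j => T i (qwCont K w hw B r j)).det‖ ≤ deltaVBase s K w hw r B :=
  le_csSup (bddAbove_norm_det_apply _) ⟨T, hT, rfl⟩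

lemma deltaVBase_nonneg : 0 ≤ deltaVBase s K w hw r B :=
  (norm_nonneg _).trans <| norm_det_le_deltaVBase (hw := hw) (B := B) 0 fun _ =>
    ContinuousLinearMap.opNorm_zero.trans_le zero_le_one

lemma norm_det_vandermondePairing_le_deltaVBase {v : Pt n → Vec s}
    (hvle : ∀ y ∈ K, ‖v y‖ ≤ 1) {x : Fin (mr n r) × Fin s → Pt n} (hx : ∀ j, x j ∈ K) :
    ‖(vandermondePairing v w r B x).det‖ ≤ deltaVBase s K w hw r B :=
  norm_det_le_deltaVBase
    (fun j => (innerSL ℂ (v (x j))).comp (ContinuousMap.evalCLM ℂ ⟨x j, hx j⟩))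
    fun j => (norm_innerSL_comp_evalCLM_le _ _).trans (hvle _ (hx j))

end TransfiniteDiameter

lemma lr_pos {n r : ℕ} (hn : 0 < n) (hr : 0 < r) : 0 < lr n r := by
  have hfirst : 1 * (mr n 1 - mr n (1 - 1)) ≤ lr n r :=
    Finset.single_le_sum (f := fun k => k * (mr n k - mr n (k - 1))) (fun _ _ => Nat.zero_le _)
      (Finset.mem_Icc.mpr ⟨le_rfl, hr⟩)
  simp only [mr, Nat.sub_self, add_zero, Nat.choose_self, Nat.choose_succ_self_right, one_mul]
    at hfirst
  omega

lemma norm_det_vandermondePairing_zero_le_one {n s : ℕ} {v : Pt n → Vec s}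
    {w : Pt n → Fin s → ℝ} {B : Fin (mr n 0) → Fin n → ℕ} (hB : IsEnum 0 (mr n 0) B)
    {x : Fin (mr n 0) × Fin s → Pt n} (hv : ∀ j, ‖v (x j)‖ ≤ 1) :
    ‖(vandermondePairing v w 0 B x).det‖ ≤ 1 := by
  have hmono : ∀ l y, mono (B l) y = 1 := fun l y => by
    have hBl : B l = 0 := funext fun i =>
      Finset.sum_eq_zero_iff.mp (Nat.le_zero.mp (hB.2.1 l)) i (Finset.mem_univ i)
    simp [mono, hBl]
  have hsingle : ∀ k y, wodot w 0 (qb B k) y = EuclideanSpace.single k.2 1 := fun k y => by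
    ext i
    simp [wodot, qb, hmono]
  have hentry : ∀ j k, ‖vandermondePairing v w 0 B x j k‖ = ‖v (x j) k.2‖ := fun j k => by
    simp [vandermondePairing, hsingle, EuclideanSpace.inner_single_right]
  refine Matrix.norm_det_le_one_of_rows _ fun j => ?_
  calc ∑ k, ‖vandermondePairing v w 0 B x j k‖ ^ 2 = ∑ i, ‖v (x j) i‖ ^ 2 := by
        simp_rw [hentry, Fintype.sum_prod_type]
        rw [Finset.sum_const, Finset.card_univ, Fintype.card_fin]
        simp [mr]
    _ = ‖v (x j)‖ ^ 2 := (EuclideanSpace.norm_sq_eq _).symm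
    _ ≤ 1 := pow_le_one₀ (norm_nonneg _) (hv j)

lemma norm_det_vandermondePairing_sq_le {n s : ℕ} (hn : 0 < n) {K : Set (Pt n)}
    [CompactSpace ↥K] {v : Pt n → Vec s} (hvle : ∀ y ∈ K, ‖v y‖ ≤ 1) {w : Pt n → Fin s → ℝ}
    (hw : ContinuousOn (fun y => w y) K) {r : ℕ} {B : Fin (mr n r) → Fin n → ℕ}
    (hB : IsEnum r (mr n r) B) {x : Fin (mr n r) × Fin s → Pt n} (hx : ∀ j, x j ∈ K) :
    ‖(vandermondePairing v w r B x).det‖ ^ 2 ≤ deltaV s K w hw r B ^ (2 * s * lr n r) := by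
  rw [mul_assoc]
  rcases eq_or_ne (s * lr n r) 0 with hzero | hpos
  · rw [hzero, mul_zero, pow_zero]
    refine pow_le_one₀ (norm_nonneg _) ?_
    rcases Nat.mul_eq_zero.mp hzero with rfl | hlr
    · simp [Matrix.det_isEmpty]
    · obtain rfl : r = 0 := by
        by_contra hr
        exact (lr_pos hn (Nat.pos_of_ne_zero hr)).ne' hlr
      exact norm_det_vandermondePairing_zero_le_one hB fun j => hvle _ (hx j)
  · rw [pow_mul', deltaV, Real.rpow_inv_natCast_pow deltaVBase_nonneg hpos]
    exact pow_le_pow_left₀ (norm_nonneg _) (norm_det_vandermondePairing_le_deltaVBase hvle hx) 2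

theorem stmt8_general {n s : ℕ} (hn : 0 < n)
    (K : Set (Pt n)) [CompactSpace ↥K] (hK : IsCompact K)
    (μ : Measure (Pt n)) [IsFiniteMeasure μ]
    (v : Pt n → Vec s)
    (hvle : ∀ y ∈ K, ‖v y‖ ≤ 1)
    (w : Pt n → Fin s → ℝ) (hw : ContinuousOn (fun y => w y) K)
    (r : ℕ) (B : Fin (mr n r) → Fin n → ℕ) (hB : IsEnum r (mr n r) B) :
    ‖(Zfun s K μ v w r (mr n r) B)‖ ≤
      (μ K).toReal ^ (s * mr n r) * (deltaV s K w hw r B) ^ (2 * s * lr n r) := by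
  rw [Zfun_eq_integral_norm_det_sq]
  refine (norm_integral_pi_restrict_le μ hK.isClosed.measurableSet
    (C := deltaV s K w hw r B ^ (2 * s * lr n r)) fun x hx => ?_).trans_eq ?_
  · rw [Complex.norm_real, Real.norm_of_nonneg (by positivity)]
    exact norm_det_vandermondePairing_sq_le hn hvle hw hB hx
  · rw [Fintype.card_prod, Fintype.card_fin, Fintype.card_fin, mul_comm, mul_comm (mr n r)]
    rfl

/-- Z_r^{v,μ,w} ≤ μ(K)^N · (δ^{w,r}(K,U))^{2sℓ_r}. -/
theorem stmt8 {n s : ℕ} (hn : 0 < n) (hs : 0 < s)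
    (K : Set (Pt n)) [CompactSpace ↥K] (hK : IsCompact K)
    (μ : Measure (Pt n)) [IsFiniteMeasure μ]
    (v : Pt n → Vec s) (hv : ∀ i, Measurable fun y => v y i) (hv1 : ∀ᵐ y ∂(μ.restrict K), ‖v y‖ = 1)
    (hvle : ∀ y ∈ K, ‖v y‖ ≤ 1)
    (w : Pt n → Fin s → ℝ) (hw : ContinuousOn (fun y => w y) K)
    (hwpos : ∀ y ∈ K, ∀ i, 0 < w y i)
    (r : ℕ) (B : Fin (mr n r) → Fin n → ℕ) (hB : IsEnum r (mr n r) B) :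
    ‖(Zfun s K μ v w r (mr n r) B)‖ ≤
      (μ K).toReal ^ (s * mr n r) * (deltaV s K w hw r B) ^ (2 * s * lr n r) :=
  stmt8_general hn K hK μ v hvle w hw r B hB
end
end

section
/- Let K ⊆ ℂⁿ be compact and w = (w₁,…,w_s) a continuous weight. For each r ∈ ℕ and each l = 1,…,s let μ_l^{(r)} be a finite Borel measure on K whose seminorm is a norm on 𝒫_{r,n}ℂ, with the supports of μ_1^{(r)},…,μ_s^{(r)} pairwise disjoint, and assume the scalar weighted Bernstein–Markov property: for each l, limsup_{r→∞} ( sup over nonzero p ∈ 𝒫_{r,n}ℂ of (sup_{x∈K}|p(x)|w_l(x)^r) / (∫_K |p|² w_l^{2r} dμ_l^{(r)})^{1/2} )^{1/r} ≤ 1. Define μ^{(r)} := (1/s)·Σ_{l=1}^{s} μ_l^{(r)} and let v^{(r)} : K → ℂˢ be any Borel function with v^{(r)}(x) = e_l for x in the support of μ_l^{(r)}. Then the vector weighted Bernstein–Markov property holds: limsup_{r→∞} M_r(K,w,v^{(r)},μ^{(r)})^{1/r} ≤ 1. -/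
open MeasureTheory Filter Topology
open scoped BigOperators ComplexConjugate ENNReal NNReal

noncomputable section

/-- The squared seminorm ‖f‖²_{v,μ} = ∫_K |⟨v(x),f(x)⟩|² dμ(x). -/
def vnormSq {n s : ℕ} (K : Set (Pt n)) (μ : Measure (Pt n)) (v : Pt n → Vec s)
    (f : Pt n → Vec s) : ℝ :=
  ∫ x in K, Complex.normSq (inner ℂ (v x) (f x) : ℂ) ∂μ

/-- The weighted Bernstein–Markov constant M_r(K,w,v,μ). -/
def Mr {n : ℕ} (s : ℕ) (K : Set (Pt n)) (μ : Measure (Pt n)) (v : Pt n → Vec s)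
    (w : Pt n → Fin s → ℝ) (r m : ℕ) (B : Fin m → Fin n → ℕ) : ℝ :=
  sSup {t : ℝ | ∃ c : Fin m × Fin s → ℂ, (∃ y, poly B c y ≠ 0) ∧
    t = sSup {y : ℝ | ∃ x ∈ K, y = ‖wodot w r (poly B c) x‖} /
        Real.sqrt (vnormSq K μ v (wodot w r (poly B c)))}

/-- The scalar weighted Bernstein–Markov constant for the weight wl and measure μ. -/
def MrS {n : ℕ} (K : Set (Pt n)) (μ : Measure (Pt n)) (wl : Pt n → ℝ) (r m : ℕ)
    (B : Fin m → Fin n → ℕ) : ℝ :=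
  sSup {t : ℝ | ∃ c : Fin m → ℂ, (∃ y, spoly B c y ≠ 0) ∧
    t = sSup {y : ℝ | ∃ x ∈ K, y = ‖spoly B c x‖ * wl x ^ r} /
        Real.sqrt (∫ x in K, Complex.normSq (spoly B c x) * (wl x ^ r) ^ 2 ∂μ)}

/-
Since `v = e_l` on a set carrying `μ_l`, the averaged measure `μ = s⁻¹ Σ_l μ_l` sees only the
`l`-th component of `p ⊙ w^r` on the support of `μ_l`, so
`‖p ⊙ w^r‖²_{v,μ} = s⁻¹ Σ_l ‖p_l w_l^r‖²_{μ_l}`. Bounding every component pointwise by the scalar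
Bernstein–Markov inequality then gives `M_r ≤ √s · max_l M_r^{(l)}`, and `(√s)^{1/r} → 1`.
-/

lemma tendsto_const_rpow_inv_natCast {C : ℝ} (hC : C ≠ 0) :
    Tendsto (fun r : ℕ => C ^ (r : ℝ)⁻¹) atTop (𝓝 1) := by
  simpa [Function.comp_def] using
    (Real.continuousAt_const_rpow hC (b := 0)).tendsto.comp tendsto_inv_atTop_nhds_zero_nat

lemma IsCompact.le_sSup_of_continuousOn {X : Type*} [TopologicalSpace X] {K : Set X}
    (hK : IsCompact K) {f : X → ℝ} (hf : ContinuousOn f K) {x : X} (hx : x ∈ K) :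
    f x ≤ sSup {y : ℝ | ∃ x ∈ K, y = f x} := by
  obtain ⟨b, hb⟩ := hK.bddAbove_image hf
  exact le_csSup ⟨b, by rintro _ ⟨z, hz, rfl⟩; exact hb ⟨z, hz, rfl⟩⟩ ⟨x, hx, rfl⟩

lemma setIntegral_mul_pos {X : Type*} [MeasurableSpace X] {μ : Measure X} {K : Set X}
    (hK : MeasurableSet K) {f g : X → ℝ} (hf : ∀ x ∈ K, 0 ≤ f x) (hg : ∀ x ∈ K, 0 < g x)
    (hfi : IntegrableOn f K μ) (hfgi : IntegrableOn (fun x => f x * g x) K μ)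
    (h : 0 < ∫ x in K, f x ∂μ) : 0 < ∫ x in K, f x * g x ∂μ := by
  rw [setIntegral_pos_iff_support_of_nonneg_ae (ae_restrict_of_forall_mem hK hf) hfi] at h
  rw [setIntegral_pos_iff_support_of_nonneg_ae
    (ae_restrict_of_forall_mem hK fun x hx => mul_nonneg (hf x hx) (hg x hx).le) hfgi]
  convert h using 2
  ext x
  simp only [Set.mem_inter_iff, Function.mem_support, and_congr_left_iff]
  exact fun hx => ⟨left_ne_zero_of_mul, fun hfx => mul_ne_zero hfx (hg x hx).ne'⟩

lemma continuous_spoly {n m : ℕ} (B : Fin m → Fin n → ℕ) (c : Fin m → ℂ) :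
    Continuous (spoly B c) := by
  unfold spoly mono
  fun_prop

section Scalar

variable {n m : ℕ} {K : Set (Pt n)} {μ : Measure (Pt n)} {wl : Pt n → ℝ} {r : ℕ}
  {B : Fin m → Fin n → ℕ}

def bmRatiosS (K : Set (Pt n)) (μ : Measure (Pt n)) (wl : Pt n → ℝ) (r m : ℕ)
    (B : Fin m → Fin n → ℕ) : Set ℝ :=
  {t : ℝ | ∃ c : Fin m → ℂ, (∃ y, spoly B c y ≠ 0) ∧
    t = sSup {y : ℝ | ∃ x ∈ K, y = ‖spoly B c x‖ * wl x ^ r} /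
        Real.sqrt (∫ x in K, Complex.normSq (spoly B c x) * (wl x ^ r) ^ 2 ∂μ)}

lemma MrS_nonneg (hwl : ∀ x ∈ K, 0 ≤ wl x) : 0 ≤ MrS K μ wl r m B := by
  refine Real.sSup_nonneg ?_
  rintro t ⟨c, -, rfl⟩
  refine div_nonneg (Real.sSup_nonneg ?_) (Real.sqrt_nonneg _)
  rintro y ⟨x, hx, rfl⟩
  exact mul_nonneg (norm_nonneg _) (pow_nonneg (hwl x hx) r)

lemma norm_spoly_mul_pow_le [IsFiniteMeasure μ] (hK : IsCompact K) (hwl : ContinuousOn wl K)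
    (hwlpos : ∀ x ∈ K, 0 < wl x) (hbdd : BddAbove (bmRatiosS K μ wl r m B)) {c : Fin m → ℂ}
    (hdet : (∃ y, spoly B c y ≠ 0) → 0 < ∫ x in K, Complex.normSq (spoly B c x) ∂μ)
    {x : Pt n} (hx : x ∈ K) :
    ‖spoly B c x‖ * wl x ^ r ≤
      MrS K μ wl r m B *
        Real.sqrt (∫ x in K, Complex.normSq (spoly B c x) * (wl x ^ r) ^ 2 ∂μ) := by
  by_cases hc : ∃ y, spoly B c y ≠ 0
  swap
  · push Not at hc
    rw [hc x, norm_zero, zero_mul]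
    exact mul_nonneg (MrS_nonneg fun x hx => (hwlpos x hx).le) (Real.sqrt_nonneg _)
  have hnormSq : Continuous fun x => Complex.normSq (spoly B c x) :=
    Complex.continuous_normSq.comp (continuous_spoly B c)
  have hI : 0 < ∫ x in K, Complex.normSq (spoly B c x) * (wl x ^ r) ^ 2 ∂μ :=
    setIntegral_mul_pos hK.measurableSet (fun x _ => Complex.normSq_nonneg _)
      (fun x hx => by have := hwlpos x hx; positivity)
      (hnormSq.continuousOn.integrableOn_compact hK)
      ((hnormSq.continuousOn.mul ((hwl.pow r).pow 2)).integrableOn_compact hK) (hdet hc)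
  have hsup := hK.le_sSup_of_continuousOn
    ((continuous_spoly B c).norm.continuousOn.mul (hwl.pow r)) hx
  have hratio := le_csSup hbdd ⟨c, hc, rfl⟩
  rw [div_le_iff₀ (Real.sqrt_pos.2 hI)] at hratio
  exact hsup.trans hratio

end Scalar

section Vector

variable {n s m : ℕ} {K : Set (Pt n)} {w : Pt n → Fin s → ℝ} {r : ℕ}
  {μl : Fin s → Measure (Pt n)} {S : Fin s → Set (Pt n)} {v : Pt n → Vec s}
  {B : Fin m → Fin n → ℕ}

def bmRatios (s : ℕ) (K : Set (Pt n)) (μ : Measure (Pt n)) (v : Pt n → Vec s)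
    (w : Pt n → Fin s → ℝ) (r m : ℕ) (B : Fin m → Fin n → ℕ) : Set ℝ :=
  {t : ℝ | ∃ c : Fin m × Fin s → ℂ, (∃ y, poly B c y ≠ 0) ∧
    t = sSup {y : ℝ | ∃ x ∈ K, y = ‖wodot w r (poly B c) x‖} /
        Real.sqrt (vnormSq K μ v (wodot w r (poly B c)))}

lemma Mr_eq_sSup {μ : Measure (Pt n)} : Mr s K μ v w r m B = sSup (bmRatios s K μ v w r m B) :=
  rfl

lemma Mr_nonneg {μ : Measure (Pt n)} : 0 ≤ Mr s K μ v w r m B := by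
  refine Real.sSup_nonneg ?_
  rintro t ⟨c, -, rfl⟩
  refine div_nonneg (Real.sSup_nonneg ?_) (Real.sqrt_nonneg _)
  rintro y ⟨x, -, rfl⟩
  exact norm_nonneg _

lemma poly_apply (c : Fin m × Fin s → ℂ) (x : Pt n) (l : Fin s) :
    poly B c x l = spoly B (fun j => c (j, l)) x := rfl

lemma wodot_poly_apply (c : Fin m × Fin s → ℂ) (x : Pt n) (l : Fin s) :
    wodot w r (poly B c) x l = (w x l : ℂ) ^ r * spoly B (fun j => c (j, l)) x := rfl

lemma norm_wodot_poly_sq {x : Pt n} (hwx : ∀ l, 0 ≤ w x l) (c : Fin m × Fin s → ℂ) :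
    ‖wodot w r (poly B c) x‖ ^ 2 = ∑ l, (‖spoly B (fun j => c (j, l)) x‖ * w x l ^ r) ^ 2 := by
  rw [EuclideanSpace.norm_sq_eq]
  refine Finset.sum_congr rfl fun l _ => ?_
  rw [wodot_poly_apply, norm_mul, norm_pow, Complex.norm_real, Real.norm_of_nonneg (hwx l),
    mul_comm]

lemma vnormSq_wodot_poly [∀ l, IsFiniteMeasure (μl l)] (hK : IsCompact K)
    (hw : ContinuousOn (fun x => w x) K) (hconc : ∀ l, μl l (S l)ᶜ = 0)
    (hv : ∀ l, ∀ x ∈ S l, v x = EuclideanSpace.single l 1) (c : Fin m × Fin s → ℂ) :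
    vnormSq K (((s : ℝ≥0∞))⁻¹ • ∑ l, μl l) v (wodot w r (poly B c)) =
      (s : ℝ)⁻¹ * ∑ l, ∫ x in K,
        Complex.normSq (spoly B (fun j => c (j, l)) x) * (w x l ^ r) ^ 2 ∂(μl l) := by
  have hae : ∀ l, (fun x => Complex.normSq (inner ℂ (v x) (wodot w r (poly B c) x)))
      =ᵐ[(μl l).restrict K]
      fun x => Complex.normSq (spoly B (fun j => c (j, l)) x) * (w x l ^ r) ^ 2 := by
    intro l
    filter_upwards [ae_restrict_of_ae (measure_eq_zero_iff_ae_notMem.1 (hconc l))] with x hx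
    rw [Set.notMem_compl_iff] at hx
    rw [hv l x hx, EuclideanSpace.inner_single_left, map_one, one_mul, wodot_poly_apply,
      Complex.normSq_mul, ← Complex.ofReal_pow, Complex.normSq_ofReal, mul_comm, sq]
  have hint : ∀ l, Integrable
      (fun x => Complex.normSq (inner ℂ (v x) (wodot w r (poly B c) x))) ((μl l).restrict K) :=
    fun l => Integrable.congr
      (((Complex.continuous_normSq.comp (continuous_spoly B _)).continuousOn.mul
        ((((continuous_apply l).comp_continuousOn hw).pow r).pow 2)).integrableOn_compact hK)
      (hae l).symm
  have hrestrict : (∑ l, μl l).restrict K = ∑ l, (μl l).restrict K :=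
    map_sum (Measure.restrictₗ K) μl _
  rw [vnormSq, Measure.restrict_smul, integral_smul_measure, hrestrict,
    integral_finsetSum_measure fun l _ => hint l, ENNReal.toReal_inv, ENNReal.toReal_natCast,
    smul_eq_mul]
  exact congrArg _ (Finset.sum_congr rfl fun l _ => integral_congr_ae (hae l))

variable [∀ l, IsFiniteMeasure (μl l)] (hK : IsCompact K) (hw : ContinuousOn (fun x => w x) K)
  (hwpos : ∀ x ∈ K, ∀ i, 0 < w x i) (hconc : ∀ l, μl l (S l)ᶜ = 0)
  (hv : ∀ l, ∀ x ∈ S l, v x = EuclideanSpace.single l 1)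
include hK hw hwpos hconc hv

lemma le_sqrt_mul_of_mem_bmRatios
    (hdet : ∀ l (c : Fin m → ℂ), (∃ y, spoly B c y ≠ 0) →
      0 < ∫ x in K, Complex.normSq (spoly B c x) ∂(μl l))
    (hbdd : ∀ l, BddAbove (bmRatiosS K (μl l) (fun x => w x l) r m B))
    {C : ℝ} (hC : 0 ≤ C) (hMC : ∀ l, MrS K (μl l) (fun x => w x l) r m B ≤ C)
    {t : ℝ} (ht : t ∈ bmRatios s K (((s : ℝ≥0∞))⁻¹ • ∑ l, μl l) v w r m B) :
    t ≤ Real.sqrt s * C := by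
  obtain ⟨c, -, rfl⟩ := ht
  set I : Fin s → ℝ := fun l => ∫ x in K,
    Complex.normSq (spoly B (fun j => c (j, l)) x) * (w x l ^ r) ^ 2 ∂(μl l)
  have hI : ∀ l, 0 ≤ I l := fun l => setIntegral_nonneg hK.measurableSet fun x _ =>
    mul_nonneg (Complex.normSq_nonneg _) (sq_nonneg _)
  have hV : vnormSq K (((s : ℝ≥0∞))⁻¹ • ∑ l, μl l) v (wodot w r (poly B c)) =
      (s : ℝ)⁻¹ * ∑ l, I l := vnormSq_wodot_poly hK hw hconc hv c
  refine div_le_of_le_mul₀ (Real.sqrt_nonneg _) (by positivity)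
    (Real.sSup_le ?_ (by positivity))
  rintro _ ⟨x, hx, rfl⟩
  have hcomp : ∀ l, ‖spoly B (fun j => c (j, l)) x‖ * w x l ^ r ≤ C * Real.sqrt (I l) :=
    fun l => (norm_spoly_mul_pow_le hK ((continuous_apply l).comp_continuousOn hw)
      (fun x hx => hwpos x hx l) (hbdd l) (hdet l _) hx).trans
      (mul_le_mul_of_nonneg_right (hMC l) (Real.sqrt_nonneg _))
  refine le_of_pow_le_pow_left₀ two_ne_zero (by positivity) ?_
  calc ‖wodot w r (poly B c) x‖ ^ 2
      = ∑ l, (‖spoly B (fun j => c (j, l)) x‖ * w x l ^ r) ^ 2 :=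
        norm_wodot_poly_sq (fun l => (hwpos x hx l).le) c
    _ ≤ ∑ l, (C * Real.sqrt (I l)) ^ 2 := Finset.sum_le_sum fun l _ =>
        pow_le_pow_left₀ (by have := hwpos x hx l; positivity) (hcomp l) 2
    _ = (Real.sqrt s * C * Real.sqrt ((s : ℝ)⁻¹ * ∑ l, I l)) ^ 2 := by
        rcases Nat.eq_zero_or_pos s with rfl | hs
        · simp
        simp_rw [mul_pow, Real.sq_sqrt (hI _), Real.sq_sqrt (Nat.cast_nonneg _),
          Real.sq_sqrt (mul_nonneg (inv_nonneg.2 (Nat.cast_nonneg s)) (Finset.sum_nonneg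
            fun l _ => hI l)), Finset.mul_sum]
        field_simp
    _ = _ := by rw [hV]

lemma sqrt_mul_mem_bmRatios {l₀ : Fin s} {t : ℝ}
    (ht : t ∈ bmRatiosS K (μl l₀) (fun x => w x l₀) r m B) :
    Real.sqrt s * t ∈ bmRatios s K (((s : ℝ≥0∞))⁻¹ • ∑ l, μl l) v w r m B := by
  obtain ⟨c, ⟨y, hy⟩, rfl⟩ := ht
  -- the vector polynomial `p · e_{l₀}`
  set c' : Fin m × Fin s → ℂ := fun j => if j.2 = l₀ then c j.1 else 0
  have hc' : ∀ l, (fun j => c' (j, l)) = if l = l₀ then c else 0 := by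
    intro l; split_ifs with hl <;> funext j <;> simp [c', hl]
  refine ⟨c', ⟨y, fun h => hy ?_⟩, ?_⟩
  · have := congrArg (· l₀) h
    rwa [poly_apply, hc', if_pos rfl] at this
  have hnorm : ∀ x ∈ K, ‖wodot w r (poly B c') x‖ = ‖spoly B c x‖ * w x l₀ ^ r := by
    intro x hx
    refine (pow_left_inj₀ (norm_nonneg _) (by have := hwpos x hx l₀; positivity)
      two_ne_zero).1 ?_
    rw [norm_wodot_poly_sq (fun l => (hwpos x hx l).le), Finset.sum_eq_single l₀]
    · rw [hc', if_pos rfl]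
    · intro l _ hl
      rw [hc', if_neg hl]
      simp [spoly]
    · simp
  have hnum : {y : ℝ | ∃ x ∈ K, y = ‖wodot w r (poly B c') x‖} =
      {y : ℝ | ∃ x ∈ K, y = ‖spoly B c x‖ * w x l₀ ^ r} := by
    ext y
    exact exists_congr fun x => and_congr_right fun hx => by rw [hnorm x hx]
  rw [hnum, vnormSq_wodot_poly hK hw hconc hv, Finset.sum_eq_single l₀, hc', if_pos rfl,
    Real.sqrt_mul (inv_nonneg.2 (Nat.cast_nonneg s)), Real.sqrt_inv, div_mul_eq_div_div,
    div_inv_eq_mul, mul_div_right_comm, mul_comm]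
  · intro l _ hl
    rw [hc', if_neg hl]
    simp [spoly]
  · simp

lemma Mr_le_sqrt_mul_of_forall_MrS_le
    (hdet : ∀ l (c : Fin m → ℂ), (∃ y, spoly B c y ≠ 0) →
      0 < ∫ x in K, Complex.normSq (spoly B c x) ∂(μl l))
    {C : ℝ} (hC : 0 ≤ C) (hMC : ∀ l, MrS K (μl l) (fun x => w x l) r m B ≤ C) :
    Mr s K (((s : ℝ≥0∞))⁻¹ • ∑ l, μl l) v w r m B ≤ Real.sqrt s * C := by
  by_cases hbdd : ∀ l, BddAbove (bmRatiosS K (μl l) (fun x => w x l) r m B)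
  · exact Real.sSup_le (fun t ht =>
      le_sqrt_mul_of_mem_bmRatios hK hw hwpos hconc hv hdet hbdd hC hMC ht) (by positivity)
  -- an unbounded scalar ratio set makes the vector one unbounded too, so `Mr` is the junk `0`
  push Not at hbdd
  obtain ⟨l₀, hl₀⟩ := hbdd
  have hs : 0 < Real.sqrt s := Real.sqrt_pos.2 (Nat.cast_pos.2 l₀.pos)
  have hunbdd : ¬ BddAbove (bmRatios s K (((s : ℝ≥0∞))⁻¹ • ∑ l, μl l) v w r m B) := by
    rintro ⟨b, hb⟩
    refine hl₀ ⟨b / Real.sqrt s, fun t ht => ?_⟩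
    rw [le_div_iff₀' hs]
    exact hb (sqrt_mul_mem_bmRatios hK hw hwpos hconc hv ht)
  rw [Mr_eq_sSup, Real.sSup_of_not_bddAbove hunbdd]
  positivity

end Vector

theorem stmt10_general {n s : ℕ} (hs : 0 < s)
    (K : Set (Pt n)) (hK : IsCompact K)
    (w : Pt n → Fin s → ℝ) (hw : ContinuousOn (fun x => w x) K)
    (hwpos : ∀ x ∈ K, ∀ i, 0 < w x i)
    (B : ∀ r : ℕ, Fin (mr n r) → Fin n → ℕ)
    (μl : ℕ → Fin s → Measure (Pt n)) (hfin : ∀ r l, IsFiniteMeasure (μl r l))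
    (hdet : ∀ r : ℕ, ∀ l : Fin s, ∀ c : Fin (mr n r) → ℂ, (∃ y, spoly (B r) c y ≠ 0) →
      0 < ∫ x in K, Complex.normSq (spoly (B r) c x) ∂(μl r l))
    (S : ℕ → Fin s → Set (Pt n))
    (hconc : ∀ r l, μl r l (S r l)ᶜ = 0)
    (v : ℕ → Pt n → Vec s)
    (hv : ∀ r : ℕ, ∀ l : Fin s, ∀ x ∈ S r l, v r x = EuclideanSpace.single l 1)
    (hBMscalar : ∀ l : Fin s, ∀ ε > (0 : ℝ), ∀ᶠ r : ℕ in atTop,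
      (MrS K (μl r l) (fun x => w x l) r (mr n r) (B r)) ^ ((r : ℝ)⁻¹) ≤ 1 + ε) :
    ∀ ε > (0 : ℝ), ∀ᶠ r : ℕ in atTop,
      (Mr s K (((s : ℝ≥0∞))⁻¹ • ∑ l : Fin s, μl r l) (v r) w r (mr n r) (B r)) ^ ((r : ℝ)⁻¹)
        ≤ 1 + ε := by
  intro ε hε
  have hsqrt : Tendsto (fun r : ℕ => Real.sqrt s ^ (r : ℝ)⁻¹ * (1 + ε / 2)) atTop
      (𝓝 (1 + ε / 2)) := by
    simpa using ((tendsto_const_rpow_inv_natCast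
      (Real.sqrt_pos.2 (Nat.cast_pos.2 hs)).ne').mul_const (1 + ε / 2))
  filter_upwards [eventually_all.2 fun l => hBMscalar l (ε / 2) (half_pos hε),
    hsqrt.eventually (gt_mem_nhds (by linarith : 1 + ε / 2 < 1 + ε)), eventually_ne_atTop 0]
    with r hMS hlt hr
  have := hfin r
  have hMC : ∀ l, MrS K (μl r l) (fun x => w x l) r (mr n r) (B r) ≤ (1 + ε / 2) ^ r := by
    intro l
    rw [← Real.rpow_natCast]
    exact (Real.rpow_inv_le_iff_of_pos (MrS_nonneg fun x hx => (hwpos x hx l).le)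
      (by positivity) (by positivity)).1 (hMS l)
  calc _ ≤ (Real.sqrt s * (1 + ε / 2) ^ r) ^ (r : ℝ)⁻¹ :=
        Real.rpow_le_rpow Mr_nonneg (Mr_le_sqrt_mul_of_forall_MrS_le hK hw hwpos (hconc r)
          (hv r) (hdet r) (by positivity) hMC) (by positivity)
    _ = Real.sqrt s ^ (r : ℝ)⁻¹ * (1 + ε / 2) := by
        rw [Real.mul_rpow (by positivity) (by positivity),
          Real.pow_rpow_inv_natCast (by positivity) hr]
    _ ≤ 1 + ε := hlt.le

/-- a vector measure built from scalar Bernstein–Markov measures with pairwise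
disjoint supports (with v = e_l on the support of μ_l) satisfies the vector weighted
Bernstein–Markov property. -/
theorem stmt10 {n s : ℕ} (hn : 0 < n) (hs : 0 < s)
    (K : Set (Pt n)) (hK : IsCompact K)
    (w : Pt n → Fin s → ℝ) (hw : ContinuousOn (fun x => w x) K)
    (hwpos : ∀ x ∈ K, ∀ i, 0 < w x i)
    (B : ∀ r : ℕ, Fin (mr n r) → Fin n → ℕ) (hB : ∀ r : ℕ, IsEnum r (mr n r) (B r))
    (μl : ℕ → Fin s → Measure (Pt n)) (hfin : ∀ r l, IsFiniteMeasure (μl r l))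
    (hdet : ∀ r : ℕ, ∀ l : Fin s, ∀ c : Fin (mr n r) → ℂ, (∃ y, spoly (B r) c y ≠ 0) →
      0 < ∫ x in K, Complex.normSq (spoly (B r) c x) ∂(μl r l))
    (S : ℕ → Fin s → Set (Pt n))
    (hconc : ∀ r l, μl r l (S r l)ᶜ = 0)
    (hdisj : ∀ r : ℕ, ∀ l₁ l₂ : Fin s, l₁ ≠ l₂ → Disjoint (S r l₁) (S r l₂))
    (v : ℕ → Pt n → Vec s)
    (hv : ∀ r : ℕ, ∀ l : Fin s, ∀ x ∈ S r l, v r x = EuclideanSpace.single l 1)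
    (hBMscalar : ∀ l : Fin s, ∀ ε > (0 : ℝ), ∀ᶠ r : ℕ in atTop,
      (MrS K (μl r l) (fun x => w x l) r (mr n r) (B r)) ^ ((r : ℝ)⁻¹) ≤ 1 + ε) :
    ∀ ε > (0 : ℝ), ∀ᶠ r : ℕ in atTop,
      (Mr s K (((s : ℝ≥0∞))⁻¹ • ∑ l : Fin s, μl r l) (v r) w r (mr n r) (B r)) ^ ((r : ℝ)⁻¹)
        ≤ 1 + ε :=
  stmt10_general hs K hK w hw hwpos B μl hfin hdet S hconc v hv hBMscalar
end
end

section
/- Let K ⊆ ℂⁿ, w a weight, r ∈ ℕ, N = s·m_r. Let x₁,…,x_N ∈ K be pairwise distinct points and i : {1,…,N} → {1,…,s}, and define the functionals T_h(ω) := ω_{i(h)}(x_h) (the i(h)-th component of ω evaluated at x_h). If det[T_h(q_k ⊙ w^r)]_{h,k=1,…,N} ≠ 0, then for every l = 1,…,s the cardinality of {h ∈ {1,…,N} : i(h) = l} equals m_r. -/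
open MeasureTheory Filter Topology
open scoped BigOperators ComplexConjugate ENNReal NNReal

noncomputable section

/-! Entry (h, (β, l)) of the matrix is x_h^β w_l(x_h)^r if i(h) = l and 0 otherwise, so the m_r
columns of direction l are supported on the rows of the fiber i⁻¹(l). These columns are linearly
independent because the determinant is nonzero, hence every fiber has at least m_r elements; as the
s fibers partition a set of s·m_r rows, each has exactly m_r. -/

theorem LinearIndependent.card_le_card_of_forall_notMem_eq_zero {K ι κ : Type*} [Field K]
    [Fintype κ] {v : κ → ι → K} (hv : LinearIndependent K v) (T : Finset ι)
    (hT : ∀ k, ∀ a ∉ T, v k a = 0) : Fintype.card κ ≤ T.card := by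
  set u : κ → T → K := fun k a => v k a
  have hextend : Function.ExtendByZero.linearMap K ((↑) : T → ι) ∘ u = v := by
    funext k a
    by_cases ha : a ∈ T
    · exact Subtype.val_injective.extend_apply (u k) 0 ⟨a, ha⟩
    · rw [Function.comp_apply, Function.ExtendByZero.linearMap_apply,
        Function.extend_apply' _ _ _ (by simpa using ha), hT k a ha, Pi.zero_apply]
  have hu : LinearIndependent K u := .of_comp _ (hextend ▸ hv)
  simpa using hu.fintype_card_le_finrank

namespace Finset

theorem card_filter_eq_of_forall_le_card_filter {α β : Type*} [Fintype α] [Fintype β]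
    [DecidableEq β] (f : α → β) (c : ℕ) (hle : ∀ b, c ≤ #{a | f a = b})
    (hcard : Fintype.card α = Fintype.card β * c) (b : β) : #{a | f a = b} = c := by
  have hsum : ∑ b' : β, c = ∑ b' : β, #{a | f a = b'} := by
    rw [← card_eq_sum_card_fiberwise fun a _ => mem_univ (f a), card_univ, hcard,
      sum_const, card_univ, smul_eq_mul]
  exact ((sum_eq_sum_iff_of_le fun b' _ => hle b').1 hsum b (mem_univ b)).symm

end Finset

theorem wodot_qb_apply_of_ne {n s m : ℕ} (w : Pt n → Fin s → ℝ) (r : ℕ)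
    (B : Fin m → Fin n → ℕ) (k : Fin m × Fin s) (y : Pt n) {j : Fin s} (hj : j ≠ k.2) :
    wodot w r (qb B k) y j = 0 := by
  simp [wodot, qb, hj]

theorem stmt11_general {n s : ℕ}
    (w : Pt n → Fin s → ℝ)
    (r : ℕ) (B : Fin (mr n r) → Fin n → ℕ)
    (x : Fin (mr n r) × Fin s → Pt n)
    (i : Fin (mr n r) × Fin s → Fin s)
    (hdet : Matrix.det (Matrix.of fun h k : Fin (mr n r) × Fin s =>
        wodot w r (qb B k) (x h) (i h)) ≠ 0) :
    ∀ l : Fin s, (Finset.univ.filter fun h : Fin (mr n r) × Fin s => i h = l).card = mr n r := by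
  refine Finset.card_filter_eq_of_forall_le_card_filter i (mr n r) (fun l => ?_)
    (by simp [mul_comm])
  have hcols := (Matrix.linearIndependent_cols_of_det_ne_zero hdet).comp _
    (Prod.mk_left_injective l)
  simpa using hcols.card_le_card_of_forall_notMem_eq_zero _ fun k h hih => by
    simpa using wodot_qb_apply_of_ne w r B (k, l) (x h) (by simpa using hih)

/-- if the Vandermonde determinant of the point-mass functionals
T_h(ω) := ω_{i(h)}(x_h) is nonzero, then each direction l is used exactly m_r times. -/
theorem stmt11 {n s : ℕ} (hn : 0 < n) (hs : 0 < s)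
    (K : Set (Pt n)) (w : Pt n → Fin s → ℝ)
    (r : ℕ) (B : Fin (mr n r) → Fin n → ℕ) (hB : IsEnum r (mr n r) B)
    (x : Fin (mr n r) × Fin s → Pt n) (hx : ∀ h, x h ∈ K)
    (hxinj : Function.Injective x)
    (i : Fin (mr n r) × Fin s → Fin s)
    (hdet : Matrix.det (Matrix.of fun h k : Fin (mr n r) × Fin s =>
        wodot w r (qb B k) (x h) (i h)) ≠ 0) :
    ∀ l : Fin s, (Finset.univ.filter fun h : Fin (mr n r) × Fin s => i h = l).card = mr n r :=
  stmt11_general w r B x i hdet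
end
end

section
/- Let K ⊆ ℂⁿ be compact, w a continuous weight, ω ∈ C(K,ℝˢ), and w(x,t) := (w₁(x)e^{−tω₁(x)},…,w_s(x)e^{−tω_s(x)}). Let x₁,…,x_N ∈ K be pairwise distinct (N = s·m_r), i : {1,…,N} → {1,…,s}, μ := (1/N)·Σ_h δ_{x_h}, v(x_h) := e_{i(h)}. Then for all t ∈ ℝ: det G_r^{v,μ,w(·,t)} = exp(−2rt·Σ_{h=1}^{N} ω_{i(h)}(x_h)) · det G_r^{v,μ,w(·,0)}. Consequently, if det G_r^{v,μ,w(·,0)} > 0, then the function f_r(t) := −(n+1)/(2nrN)·log det G_r^{v,μ,w(·,t)} is affine (in particular concave) in t, with derivative f_r'(t) = (n+1)/(nN) · Σ_{h=1}^{N} ω_{i(h)}(x_h) for every t. -/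
open MeasureTheory Filter Topology
open scoped BigOperators ComplexConjugate ENNReal NNReal

noncomputable section

/-- The Gram matrix G_r^{v,μ,w}. -/
def Gmat {n : ℕ} (s : ℕ) (K : Set (Pt n)) (μ : Measure (Pt n)) (v : Pt n → Vec s)
    (w : Pt n → Fin s → ℝ) (r m : ℕ) (B : Fin m → Fin n → ℕ) :
    Matrix (Fin m × Fin s) (Fin m × Fin s) ℂ :=
  Matrix.of fun i j => ∫ x in K, gval v x (wodot w r (qb B i) x) (wodot w r (qb B j) x) ∂μ

/-- The varied weight w(x,t) := (w₁(x)e^{−tω₁(x)},…,w_s(x)e^{−tω_s(x)}). -/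
def wmod {n s : ℕ} (w ω : Pt n → Fin s → ℝ) (t : ℝ) : Pt n → Fin s → ℝ :=
  fun y j => w y j * Real.exp (-t * ω y j)

/-! For point masses at the nodes with `v(x_h) = e_{i(h)}`, the Gram matrix factors as
`G = N⁻¹ Aᴴ A`, where `A` is the square matrix of the weighted basis polynomials evaluated at the
nodes and read in the direction `e_{i(h)}`. Replacing `w` by `w(·,t)` multiplies row `h` of `A` by
the real number `e^{−rtω_{i(h)}(x_h)}`, so `det (Aᴴ A)` picks up the square of their product,
`∏_h e^{−2rtω_{i(h)}(x_h)}`. Taking logarithms makes `f_r` affine in `t`. -/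

open scoped Matrix

theorem setIntegral_smul_sum_dirac {α E ι : Type*} [MeasurableSpace α]
    [MeasurableSingletonClass α] [NormedAddCommGroup E] [NormedSpace ℝ E] [CompleteSpace E]
    [Fintype ι]
    {K : Set α} {p : ι → α} (hp : ∀ h, p h ∈ K) (c : ℝ≥0∞) (f : α → E) :
    ∫ y in K, f y ∂(c • ∑ h, Measure.dirac (p h)) = c.toReal • ∑ h, f (p h) := by
  classical
  have hrestrict : (∑ h, Measure.dirac (p h)).restrict K = ∑ h, Measure.dirac (p h) := by
    rw [← Measure.restrictₗ_apply, map_sum]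
    refine Finset.sum_congr rfl fun h _ => ?_
    rw [Measure.restrictₗ_apply, restrict_dirac, if_pos (hp h)]
  rw [Measure.restrict_smul, hrestrict, integral_smul_measure,
    integral_finsetSum_measure fun h _ => integrable_dirac enorm_lt_top]
  simp only [integral_dirac]

section GramMatrix

variable {n s m : ℕ} {ι : Type*} [Fintype ι]

def sampleMatrix (x : ι → Pt n) (i : ι → Fin s) (W : Pt n → Fin s → ℝ) (r : ℕ)
    (B : Fin m → Fin n → ℕ) : Matrix ι (Fin m × Fin s) ℂ :=
  Matrix.of fun h p => wodot W r (qb B p) (x h) (i h)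

theorem Gmat_smul_sum_dirac {K : Set (Pt n)} {x : ι → Pt n} (hx : ∀ h, x h ∈ K)
    {i : ι → Fin s} {v : Pt n → Vec s} (hvx : ∀ h, v (x h) = EuclideanSpace.single (i h) 1)
    (c : ℝ≥0∞) (W : Pt n → Fin s → ℝ) (r : ℕ) (B : Fin m → Fin n → ℕ) :
    Gmat s K (c • ∑ h, Measure.dirac (x h)) v W r m B =
      (c.toReal : ℂ) • ((sampleMatrix x i W r B)ᴴ * sampleMatrix x i W r B) := by
  ext p q
  rw [Gmat, Matrix.of_apply, setIntegral_smul_sum_dirac hx, Complex.real_smul]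
  simp [gval, sampleMatrix, Matrix.mul_apply, hvx, EuclideanSpace.inner_single_left]

theorem sampleMatrix_wmod [DecidableEq ι] (x : ι → Pt n) (i : ι → Fin s)
    (w ω : Pt n → Fin s → ℝ) (t : ℝ) (r : ℕ) (B : Fin m → Fin n → ℕ) :
    sampleMatrix x i (wmod w ω t) r B =
      Matrix.diagonal (fun h => ((Real.exp (-t * ω (x h) (i h)) ^ r : ℝ) : ℂ)) *
        sampleMatrix x i w r B := by
  ext h p
  simp only [sampleMatrix, Matrix.of_apply, wodot, wmod, Matrix.diagonal_mul]
  push_cast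
  ring

end GramMatrix

theorem det_smul_conjTranspose_mul_of_diagonal_mul {R ι : Type*} [CommRing R] [StarRing R]
    [Fintype ι] [DecidableEq ι] (c : R) {d : ι → R} (hd : ∀ h, star (d h) = d h)
    (A : Matrix ι ι R) :
    (c • ((Matrix.diagonal d * A)ᴴ * (Matrix.diagonal d * A))).det =
      (∏ h, d h) ^ 2 * (c • (Aᴴ * A)).det := by
  simp only [Matrix.det_smul, Matrix.det_mul, Matrix.conjTranspose_mul, Matrix.det_conjTranspose,
    Matrix.det_diagonal, star_prod, hd]
  ring

theorem sq_prod_exp_neg_mul_pow {ι : Type*} [Fintype ι] (a : ι → ℝ) (t : ℝ) (r : ℕ) :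
    (∏ h, Real.exp (-t * a h) ^ r) ^ 2 = Real.exp (-2 * r * t * ∑ h, a h) := by
  simp only [← Real.exp_nat_mul, ← Real.exp_sum, Finset.mul_sum]
  congr 1
  refine Finset.sum_congr rfl fun h _ => ?_
  push_cast
  ring

theorem stmt13_general {n s : ℕ}
    (K : Set (Pt n))
    (w : Pt n → Fin s → ℝ)
    (ω : Pt n → Fin s → ℝ)
    (r : ℕ) (hr : 0 < r) (B : Fin (mr n r) → Fin n → ℕ)
    (x : Fin (mr n r) × Fin s → Pt n) (hx : ∀ h, x h ∈ K)
    (i : Fin (mr n r) × Fin s → Fin s)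
    (v : Pt n → Vec s) (hvx : ∀ h, v (x h) = EuclideanSpace.single (i h) 1)
    (μ : Measure (Pt n))
    (hμ : μ = ((s * mr n r : ℕ) : ℝ≥0∞)⁻¹ •
      ∑ h : Fin (mr n r) × Fin s, Measure.dirac (x h)) :
    (∀ t : ℝ, (Gmat s K μ v (wmod w ω t) r (mr n r) B).det =
        (Real.exp (-2 * r * t * ∑ h : Fin (mr n r) × Fin s, ω (x h) (i h)) : ℂ) *
          (Gmat s K μ v w r (mr n r) B).det) ∧
    (0 < ((Gmat s K μ v w r (mr n r) B).det).re →
      (∀ t : ℝ, HasDerivAt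
          (fun t' : ℝ => -((n + 1 : ℝ) / (2 * n * r * (s * mr n r))) *
            Real.log ((Gmat s K μ v (wmod w ω t') r (mr n r) B).det.re))
          ((n + 1 : ℝ) / (n * (s * mr n r)) *
            ∑ h : Fin (mr n r) × Fin s, ω (x h) (i h)) t) ∧
      ConcaveOn ℝ Set.univ
        (fun t' : ℝ => -((n + 1 : ℝ) / (2 * n * r * (s * mr n r))) *
          Real.log ((Gmat s K μ v (wmod w ω t') r (mr n r) B).det.re))) := by
  set S := ∑ h : Fin (mr n r) × Fin s, ω (x h) (i h)
  have hdet (t : ℝ) : (Gmat s K μ v (wmod w ω t) r (mr n r) B).det =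
      (Real.exp (-2 * r * t * S) : ℂ) * (Gmat s K μ v w r (mr n r) B).det := by
    rw [hμ, Gmat_smul_sum_dirac hx hvx, Gmat_smul_sum_dirac hx hvx, sampleMatrix_wmod,
      det_smul_conjTranspose_mul_of_diagonal_mul _ fun h => Complex.conj_ofReal _,
      ← Complex.ofReal_prod, ← Complex.ofReal_pow, sq_prod_exp_neg_mul_pow]
  refine ⟨hdet, fun hpos => ?_⟩
  set c : ℝ := (n + 1 : ℝ) / (2 * n * r * (s * mr n r))
  have haffine : (fun t => -c * Real.log (Gmat s K μ v (wmod w ω t) r (mr n r) B).det.re) =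
      fun t => (2 * r * S * c) * t + -c * Real.log (Gmat s K μ v w r (mr n r) B).det.re := by
    funext t
    rw [hdet t, Complex.re_ofReal_mul, Real.log_mul (Real.exp_ne_zero _) hpos.ne', Real.log_exp]
    ring
  have hslope : 2 * r * S * c = (n + 1 : ℝ) / (n * (s * mr n r)) * S := by
    have hr' : (r : ℝ) ≠ 0 := Nat.cast_ne_zero.mpr hr.ne'
    simp only [c]
    field_simp
  rw [haffine, ← hslope]
  exact ⟨fun t => (((hasDerivAt_id' t).const_mul _).add_const _).congr_deriv (mul_one _),
    ((LinearMap.mul ℝ ℝ (2 * r * S * c)).concaveOn convex_univ).add_const _⟩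

/-- for vector point masses supported at the nodes, det G_r^{v,μ,w(·,t)} =
e^{−2rt Σ ω_{i(h)}(x_h)} · det G_r^{v,μ,w(·,0)}; hence f_r is affine (in particular concave)
with constant derivative (n+1)/(nN) Σ_h ω_{i(h)}(x_h). -/
theorem stmt13 {n s : ℕ} (hn : 0 < n) (hs : 0 < s)
    (K : Set (Pt n)) (hK : IsCompact K)
    (w : Pt n → Fin s → ℝ) (hw : ContinuousOn (fun y => w y) K)
    (hwpos : ∀ y ∈ K, ∀ j, 0 < w y j)
    (ω : Pt n → Fin s → ℝ) (hω : ContinuousOn (fun y => ω y) K)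
    (r : ℕ) (hr : 0 < r) (B : Fin (mr n r) → Fin n → ℕ) (hB : IsEnum r (mr n r) B)
    (x : Fin (mr n r) × Fin s → Pt n) (hx : ∀ h, x h ∈ K)
    (hxinj : Function.Injective x)
    (i : Fin (mr n r) × Fin s → Fin s)
    (v : Pt n → Vec s) (hvx : ∀ h, v (x h) = EuclideanSpace.single (i h) 1)
    (μ : Measure (Pt n))
    (hμ : μ = ((s * mr n r : ℕ) : ℝ≥0∞)⁻¹ •
      ∑ h : Fin (mr n r) × Fin s, Measure.dirac (x h)) :
    (∀ t : ℝ, (Gmat s K μ v (wmod w ω t) r (mr n r) B).det =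
        (Real.exp (-2 * r * t * ∑ h : Fin (mr n r) × Fin s, ω (x h) (i h)) : ℂ) *
          (Gmat s K μ v w r (mr n r) B).det) ∧
    (0 < ((Gmat s K μ v w r (mr n r) B).det).re →
      (∀ t : ℝ, HasDerivAt
          (fun t' : ℝ => -((n + 1 : ℝ) / (2 * n * r * (s * mr n r))) *
            Real.log ((Gmat s K μ v (wmod w ω t') r (mr n r) B).det.re))
          ((n + 1 : ℝ) / (n * (s * mr n r)) *
            ∑ h : Fin (mr n r) × Fin s, ω (x h) (i h)) t) ∧
      ConcaveOn ℝ Set.univ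
        (fun t' : ℝ => -((n + 1 : ℝ) / (2 * n * r * (s * mr n r))) *
          Real.log ((Gmat s K μ v (wmod w ω t') r (mr n r) B).det.re))) :=
  stmt13_general K w ω r hr B x hx i v hvx μ hμ
end
end

section
/- Let K ⊆ ℂⁿ be compact, w a continuous weight, (v,μ) a vector measure pair on K, ω ∈ C(K,ℝˢ), and w(x,t) := (w₁(x)e^{−tω₁(x)},…,w_s(x)e^{−tω_s(x)}). Then for all h,k ∈ {1,…,N} the entry t ↦ (G_r^{v,μ,w(·,t)})_{h,k} is differentiable on ℝ with d/dt (G_r^{v,μ,w(·,t)})_{h,k} = −r · ∫_K [ g_x(q_h ⊙ w^r(·,t), q_k ⊙ w^r(·,t) ⊙ ω) + g_x(q_h ⊙ w^r(·,t) ⊙ ω, q_k ⊙ w^r(·,t)) ] dμ(x). -/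
open MeasureTheory Filter Topology
open scoped BigOperators ComplexConjugate ENNReal NNReal

noncomputable section

/-! Each basis polynomial `q_i` lives in a single coordinate of `ℂˢ`, so replacing `w` by
`w(·,t)` multiplies the integrand of the `(h,k)` entry by the scalar `e^{t c}` with
`c = -r (ω_{h₂} + ω_{k₂})`. The entry is therefore `t ↦ ∫_K φ e^{t c} dμ` with `φ` integrable
(`‖v‖ = 1` and the remaining factors are continuous on the compact `K`) and `c` bounded on `K`,
and it can be differentiated under the integral sign by dominated convergence. -/

lemma norm_cexp_ofReal_mul_le {t M : ℝ} {c : ℂ} (hc : ‖c‖ ≤ M) :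
    ‖Complex.exp (t * c)‖ ≤ Real.exp (|t| * M) := by
  rw [Complex.norm_exp]
  refine Real.exp_le_exp.2 ((Complex.re_le_norm _).trans ?_)
  rw [norm_mul, Complex.norm_real, Real.norm_eq_abs]
  exact mul_le_mul_of_nonneg_left hc (abs_nonneg t)

theorem hasDerivAt_integral_mul_cexp {α : Type*} [MeasurableSpace α] {μ : Measure α}
    {φ c : α → ℂ} {M : ℝ} (hφ : Integrable φ μ) (hc : AEStronglyMeasurable c μ)
    (hcM : ∀ᵐ y ∂μ, ‖c y‖ ≤ M) (t : ℝ) :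
    HasDerivAt (fun t' : ℝ => ∫ y, φ y * Complex.exp (t' * c y) ∂μ)
      (∫ y, φ y * (c y * Complex.exp (t * c y)) ∂μ) t := by
  have hexp : ∀ t' : ℝ, AEStronglyMeasurable (fun y => Complex.exp (t' * c y)) μ :=
    fun t' => Complex.continuous_exp.comp_aestronglyMeasurable (hc.const_mul _)
  have hbound : ∀ᵐ y ∂μ, ∀ t' ∈ Metric.ball t 1,
      ‖φ y * (c y * Complex.exp (t' * c y))‖ ≤ ‖φ y‖ * (M * Real.exp ((|t| + 1) * M)) := by
    filter_upwards [hcM] with y hy t' ht'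
    have ht' : |t'| ≤ |t| + 1 := by
      have := abs_sub_abs_le_abs_sub t' t
      rw [Metric.mem_ball, Real.dist_eq] at ht'
      linarith
    have hM : 0 ≤ M := (norm_nonneg _).trans hy
    rw [norm_mul, norm_mul]
    gcongr
    exact (norm_cexp_ofReal_mul_le hy).trans (Real.exp_le_exp.2 (by gcongr))
  have hderiv : ∀ (y : α) (t' : ℝ), HasDerivAt (fun u : ℝ => φ y * Complex.exp (u * c y))
      (φ y * (c y * Complex.exp (t' * c y))) t' := by
    intro y t'
    have := (((hasDerivAt_id t').ofReal_comp).mul_const (c y)).cexp.const_mul (φ y)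
    simpa [mul_comm] using this
  exact (hasDerivAt_integral_of_dominated_loc_of_deriv_le (Metric.ball_mem_nhds t one_pos)
    (Eventually.of_forall fun t' => hφ.aestronglyMeasurable.mul (hexp t'))
    (hφ.mul_bdd (hexp t) (hcM.mono fun y hy => norm_cexp_ofReal_mul_le hy))
    (hφ.aestronglyMeasurable.mul (hc.mul (hexp t))) hbound (hφ.norm.mul_const _)
    (Eventually.of_forall fun y t' _ => hderiv y t')).2

section Gram

variable {n s m : ℕ}

lemma gval_smul_left (v : Pt n → Vec s) (y : Pt n) (c : ℂ) (a b : Vec s) :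
    gval v y (c • a) b = conj c * gval v y a b := by
  simp only [gval, inner_smul_right, map_mul]
  ring

lemma gval_smul_right (v : Pt n → Vec s) (y : Pt n) (c : ℂ) (a b : Vec s) :
    gval v y a (c • b) = c * gval v y a b := by
  simp only [gval, inner_smul_right]
  ring

lemma norm_gval_le (v : Pt n → Vec s) (y : Pt n) (a b : Vec s) :
    ‖gval v y a b‖ ≤ ‖v y‖ * ‖a‖ * (‖v y‖ * ‖b‖) := by
  rw [gval, norm_mul, RCLike.norm_conj]
  exact mul_le_mul (norm_inner_le_norm _ _) (norm_inner_le_norm _ _) (norm_nonneg _)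
    (by positivity)

lemma continuous_mono (β : Fin n → ℕ) : Continuous (mono β) :=
  continuous_finsetProd _ fun i _ => (continuous_apply i).pow _

lemma continuous_qb (B : Fin m → Fin n → ℕ) (k : Fin m × Fin s) : Continuous (qb B k) :=
  (PiLp.continuous_toLp 2 _).comp ((continuous_single k.2).comp (continuous_mono (B k.1)))

lemma ContinuousOn.wodot {W : Pt n → Fin s → ℝ} {f : Pt n → Vec s} {K : Set (Pt n)}
    (hW : ContinuousOn W K) (hf : ContinuousOn f K) (r : ℕ) : ContinuousOn (wodot W r f) K := by
  refine (PiLp.continuous_toLp 2 _).comp_continuousOn (continuousOn_pi.2 fun i => ?_)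
  have hWi : ContinuousOn (fun y => (W y i : ℂ)) K :=
    Complex.continuous_ofReal.comp_continuousOn ((continuous_apply i).comp_continuousOn hW)
  have hfi : ContinuousOn (fun y => f y i) K :=
    ((continuous_apply i).comp (PiLp.continuous_ofLp 2 _)).comp_continuousOn hf
  exact (hWi.pow r).mul hfi

lemma wodot_modot_qb (W ω : Pt n → Fin s → ℝ) (r : ℕ) (B : Fin m → Fin n → ℕ)
    (k : Fin m × Fin s) (y : Pt n) :
    wodot W r (modot ω (qb B k)) y = (ω y k.2 : ℂ) • wodot W r (qb B k) y := by
  ext i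
  by_cases hi : i = k.2
  · subst hi
    simp only [wodot, modot, qb, PiLp.single_apply, ↓reduceIte, PiLp.smul_apply, smul_eq_mul]
    ring
  · simp [wodot, modot, qb, hi]

lemma wodot_wmod_qb (w ω : Pt n → Fin s → ℝ) (t : ℝ) (r : ℕ) (B : Fin m → Fin n → ℕ)
    (k : Fin m × Fin s) (y : Pt n) :
    wodot (wmod w ω t) r (qb B k) y
      = Complex.exp (t * -(r * ω y k.2)) • wodot w r (qb B k) y := by
  ext i
  by_cases hi : i = k.2
  · subst hi
    simp only [wodot, wmod, qb, PiLp.smul_apply, PiLp.single_eq_same, smul_eq_mul]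
    push_cast
    rw [mul_pow, ← Complex.exp_nat_mul]
    ring_nf
  · simp [wodot, wmod, qb, hi]

lemma gval_wodot_wmod_qb (v : Pt n → Vec s) (w ω : Pt n → Fin s → ℝ) (t : ℝ) (r : ℕ)
    (B : Fin m → Fin n → ℕ) (h k : Fin m × Fin s) (y : Pt n) :
    gval v y (wodot (wmod w ω t) r (qb B h) y) (wodot (wmod w ω t) r (qb B k) y)
      = gval v y (wodot w r (qb B h) y) (wodot w r (qb B k) y)
        * Complex.exp (t * -(r * (ω y h.2 + ω y k.2))) := by
  rw [wodot_wmod_qb, wodot_wmod_qb, gval_smul_left, gval_smul_right, ← Complex.exp_conj,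
    mul_left_comm, ← mul_assoc, ← Complex.exp_add, mul_comm]
  simp only [map_mul, map_neg, Complex.conj_ofReal, map_natCast]
  ring_nf

lemma integrableOn_gval {μ : Measure (Pt n)} [IsFiniteMeasureOnCompacts μ] {K : Set (Pt n)}
    (hK : IsCompact K) {v : Pt n → Vec s} (hv : Measurable v) (hv1 : ∀ᵐ y ∂μ.restrict K, ‖v y‖ ≤ 1)
    {a b : Pt n → Vec s} (ha : ContinuousOn a K) (hb : ContinuousOn b K) :
    IntegrableOn (fun y => gval v y (a y) (b y)) K μ := by
  have hKm := hK.isClosed.measurableSet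
  have hva : AEStronglyMeasurable (fun y => inner ℂ (v y) (a y)) (μ.restrict K) :=
    hv.aestronglyMeasurable.inner (ha.aestronglyMeasurable hKm)
  have hvb : AEStronglyMeasurable (fun y => inner ℂ (v y) (b y)) (μ.restrict K) :=
    hv.aestronglyMeasurable.inner (hb.aestronglyMeasurable hKm)
  refine Integrable.mono' ((ha.norm.mul hb.norm).integrableOn_compact hK)
    ((Complex.continuous_conj.comp_aestronglyMeasurable hva).mul hvb) ?_
  filter_upwards [hv1] with y hy
  calc ‖gval v y (a y) (b y)‖ ≤ ‖v y‖ * ‖a y‖ * (‖v y‖ * ‖b y‖) := norm_gval_le v y _ _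
    _ ≤ 1 * ‖a y‖ * (1 * ‖b y‖) := by gcongr
    _ = ‖a y‖ * ‖b y‖ := by ring

end Gram

theorem stmt17_general {n s : ℕ}
    (K : Set (Pt n)) (hK : IsCompact K)
    (μ : Measure (Pt n)) [IsFiniteMeasure μ]
    (v : Pt n → Vec s) (hv : ∀ i, Measurable fun y => v y i)
    (hv1 : ∀ᵐ y ∂(μ.restrict K), ‖v y‖ = 1)
    (w : Pt n → Fin s → ℝ) (hw : ContinuousOn (fun y => w y) K)
    (ω : Pt n → Fin s → ℝ) (hω : ContinuousOn (fun y => ω y) K)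
    (r : ℕ) (B : Fin (mr n r) → Fin n → ℕ)
    (h k : Fin (mr n r) × Fin s) (t : ℝ) :
    HasDerivAt (fun t' : ℝ => Gmat s K μ v (wmod w ω t') r (mr n r) B h k)
      (-(r : ℂ) * ∫ y in K,
        (gval v y (wodot (wmod w ω t) r (qb B h) y)
            (wodot (wmod w ω t) r (modot ω (qb B k)) y) +
          gval v y (wodot (wmod w ω t) r (modot ω (qb B h)) y)
            (wodot (wmod w ω t) r (qb B k) y)) ∂μ)
      t := by
  have hKm := hK.isClosed.measurableSet
  set c : Pt n → ℂ := fun y => -(r * (ω y h.2 + ω y k.2))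
  have hc : ContinuousOn c K := by fun_prop
  obtain ⟨M, hM⟩ := hK.exists_bound_of_continuousOn hc
  have hvm : Measurable v := (WithLp.measurable_toLp 2 _).comp (measurable_pi_iff.2 hv)
  have hφ := integrableOn_gval (μ := μ) hK hvm (hv1.mono fun _ hy => hy.le)
    (hw.wodot (continuous_qb B h).continuousOn r) (hw.wodot (continuous_qb B k).continuousOn r)
  convert hasDerivAt_integral_mul_cexp hφ (hc.aestronglyMeasurable hKm)
    ((ae_restrict_mem hKm).mono hM) t using 1
  · funext t'
    exact integral_congr_ae (Eventually.of_forall fun y => gval_wodot_wmod_qb v w ω t' r B h k y)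
  · rw [← integral_const_mul]
    refine integral_congr_ae (Eventually.of_forall fun y => ?_)
    simp only [wodot_modot_qb, gval_smul_left, gval_smul_right, gval_wodot_wmod_qb, c,
      Complex.conj_ofReal]
    ring

/-- entrywise derivative of the weighted Gram matrix. -/
theorem stmt17 {n s : ℕ} (hn : 0 < n) (hs : 0 < s)
    (K : Set (Pt n)) (hK : IsCompact K)
    (μ : Measure (Pt n)) [IsFiniteMeasure μ]
    (v : Pt n → Vec s) (hv : ∀ i, Measurable fun y => v y i)
    (hv1 : ∀ᵐ y ∂(μ.restrict K), ‖v y‖ = 1)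
    (w : Pt n → Fin s → ℝ) (hw : ContinuousOn (fun y => w y) K)
    (hwpos : ∀ y ∈ K, ∀ j, 0 < w y j)
    (ω : Pt n → Fin s → ℝ) (hω : ContinuousOn (fun y => ω y) K)
    (r : ℕ) (B : Fin (mr n r) → Fin n → ℕ) (hB : IsEnum r (mr n r) B)
    (h k : Fin (mr n r) × Fin s) (t : ℝ) :
    HasDerivAt (fun t' : ℝ => Gmat s K μ v (wmod w ω t') r (mr n r) B h k)
      (-(r : ℂ) * ∫ y in K,
        (gval v y (wodot (wmod w ω t) r (qb B h) y)
            (wodot (wmod w ω t) r (modot ω (qb B k)) y) +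
          gval v y (wodot (wmod w ω t) r (modot ω (qb B h)) y)
            (wodot (wmod w ω t) r (qb B k) y)) ∂μ)
      t :=
  stmt17_general K hK μ v hv hv1 w hw ω hω r B h k t
end
end
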